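/- The critical density λ_c = 1.28·λ_u / [(1/r)·log₂(1 + C⁻¹(log((m_d−m_c)/(m_d−m_t)))) − 1] is monotonically increasing in the inference rate r, on the range of r where m_asy(r) < m_t. -/

import Mathlib

/-!
Membership of `r` in the range forces `C (2 ^ r - 1) < log ((m_d - m_c) / (m_d - m_t))`; since
`C` is monotone this gives `2 ^ r - 1 < C⁻¹ (log …)`, i.e. `r < L := log₂ (1 + C⁻¹ (log …))`.
On `0 < r < L` the denominator `L / r - 1` is positive and decreasing in `r`, so
`λ_c = 1.28 λ_u / (L / r - 1)` is increasing.
-/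

noncomputable def C (x : ℝ) : ℝ := Real.sqrt x * Real.arctan (Real.sqrt x)

lemma C_nonneg (x : ℝ) : 0 ≤ C x :=
  mul_nonneg (Real.sqrt_nonneg x) (Real.arctan_nonneg.mpr (Real.sqrt_nonneg x))

lemma C_monotone : Monotone C := fun a b hab =>
  mul_le_mul (Real.sqrt_le_sqrt hab) (Real.arctan_strictMono.monotone (Real.sqrt_le_sqrt hab))
    (Real.arctan_nonneg.mpr (Real.sqrt_nonneg a)) (Real.sqrt_nonneg b)

lemma lt_log_div_of_sub_mul_exp_neg_lt {mc mt md c : ℝ} (hmt : mt < md)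
    (h : md - (md - mc) * Real.exp (-c) < mt) : c < Real.log ((md - mc) / (md - mt)) := by
  have hdt : 0 < md - mt := sub_pos.mpr hmt
  have hgap : md - mt < (md - mc) * Real.exp (-c) := by linarith
  have hdc : 0 < md - mc := pos_of_mul_pos_left (hdt.trans hgap) (Real.exp_pos _).le
  rw [Real.lt_log_iff_exp_lt (div_pos hdc hdt), lt_div_iff₀ hdt]
  calc Real.exp c * (md - mt) < Real.exp c * ((md - mc) * Real.exp (-c)) :=
        mul_lt_mul_of_pos_left hgap (Real.exp_pos c)
    _ = md - mc := by rw [mul_left_comm, ← Real.exp_add, add_neg_cancel, Real.exp_zero, mul_one]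

lemma monotoneOn_div_one_div_mul_sub_one {k L : ℝ} (hk : 0 ≤ k) :
    MonotoneOn (fun r : ℝ => k / ((1 / r) * L - 1)) {r : ℝ | 0 < r ∧ r < L} := by
  rintro a ⟨ha, haL⟩ b ⟨hb, hbL⟩ hab
  simp only [one_div, inv_mul_eq_div]
  have hDb : 0 < L / b - 1 := sub_pos.mpr ((one_lt_div hb).mpr hbL)
  have hDle : L / b - 1 ≤ L / a - 1 :=
    sub_le_sub_right (div_le_div_of_nonneg_left (ha.trans haL).le ha hab) 1
  exact div_le_div_of_nonneg_left hk hDb hDle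

theorem critical_density_monotone_in_rate_general (mc mt md lu : ℝ) (Cinv : ℝ → ℝ)
    (hCinv_right : ∀ y ≥ (0:ℝ), C (Cinv y) = y)
    (h2 : mt < md) (hu : 0 < lu) :
    MonotoneOn (fun r : ℝ =>
        1.28 * lu / ((1 / r) * Real.logb 2 (1 + Cinv (Real.log ((md - mc) / (md - mt)))) - 1))
      {r : ℝ | 0 < r ∧ md - (md - mc) * Real.exp (-(C ((2:ℝ) ^ r - 1))) < mt} := by
  refine (monotoneOn_div_one_div_mul_sub_one (by positivity)).mono ?_
  rintro r ⟨hr, hmem⟩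
  refine ⟨hr, ?_⟩
  set y := Real.log ((md - mc) / (md - mt))
  have hCy : C ((2:ℝ) ^ r - 1) < y := lt_log_div_of_sub_mul_exp_neg_lt h2 hmem
  have hK : (2:ℝ) ^ r - 1 < Cinv y :=
    C_monotone.reflect_lt (by rwa [hCinv_right y ((C_nonneg _).trans hCy.le)])
  have h2r : 0 < (2:ℝ) ^ r := by positivity
  rw [Real.lt_logb_iff_rpow_lt one_lt_two (by linarith)]
  linarith

theorem critical_density_monotone_in_rate (mc mt md lu : ℝ) (Cinv : ℝ → ℝ)
    (hCinv_left : ∀ x ≥ (0:ℝ), Cinv (C x) = x)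
    (hCinv_right : ∀ y ≥ (0:ℝ), C (Cinv y) = y)
    (hm0 : 0 ≤ mc) (h1 : mc < mt) (h2 : mt < md) (hu : 0 < lu) :
    MonotoneOn (fun r : ℝ =>
        1.28 * lu / ((1 / r) * Real.logb 2 (1 + Cinv (Real.log ((md - mc) / (md - mt)))) - 1))
      {r : ℝ | 0 < r ∧ md - (md - mc) * Real.exp (-(C ((2:ℝ) ^ r - 1))) < mt} :=
  critical_density_monotone_in_rate_general mc mt md lu Cinv hCinv_right h2 hu
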